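/- For every q ≥ 2, the shift locus S_q is an open subset of ℂ^(q-1). -/

import Mathlib

/-- The normalized degree `q` polynomial `z ↦ z^q + a₂ z^(q-2) + ⋯ + a_q`, where the
coefficient `a_{i+2}` (for `i : Fin (q-1)`) multiplies `z^(q-2-i)`. -/
noncomputable def normPoly (q : ℕ) (a : Fin (q - 1) → ℂ) : ℂ → ℂ :=
  fun z => z ^ q + ∑ i : Fin (q - 1), a i * z ^ (q - 2 - (i : ℕ))

/-- The degree `q` shift locus: the set of coefficient vectors `a` such that every
critical point of the normalized polynomial `f_a` has unbounded forward orbit. -/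
def shiftLocus (q : ℕ) : Set (Fin (q - 1) → ℂ) :=
  {a | ∀ c : ℂ, deriv (normPoly q a) c = 0 →
    ¬ Bornology.IsBounded (Set.range fun n : ℕ => (normPoly q a)^[n] c)}

/-!
If `‖z‖ ≥ R(a) := 2 + Σ ‖a_i‖` then `‖f_a z‖ ≥ 2 ‖z‖`, so an orbit that ever leaves the disk of
radius `R(a)` is unbounded. Hence the complement of the shift locus is the projection to the
parameter space of the set of pairs `(a, c)` with `f_a'(c) = 0` and `‖f_a^n(c)‖ ≤ R(a)` for all `n`.
That set is closed by continuity, and since `R` is continuous its projection is closed.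
-/

open Filter Bornology Set Metric Topology

section ClosedProjection

variable {X Y : Type*} [TopologicalSpace X] [T2Space X] [CompactlyCoherentSpace X]
  [NormedAddCommGroup Y] [ProperSpace Y]

/-- Over a compact set of `x` the fibres of `K` lie in a fixed ball, so `Prod.fst` restricted to
`K` is proper. -/
theorem isClosed_image_fst_of_norm_le {K : Set (X × Y)} (hK : IsClosed K) {r : X → ℝ}
    (hr : Continuous r) (hKr : ∀ p ∈ K, ‖p.2‖ ≤ r p.1) : IsClosed (Prod.fst '' K) := by
  have hproper : IsProperMap (Prod.fst ∘ ((↑) : K → X × Y)) := by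
    refine isProperMap_iff_isCompact_preimage.mpr ⟨by fun_prop, fun C hC => ?_⟩
    obtain ⟨M, hM⟩ := hC.exists_bound_of_continuousOn hr.continuousOn
    rw [Subtype.isCompact_iff]
    refine (hC.prod (isCompact_closedBall (0 : Y) M)).of_isClosed_subset ?_ ?_
    · convert hK.inter (hC.isClosed.preimage continuous_fst) using 1
      ext p
      simp [and_comm]
    · rintro _ ⟨p, hp, rfl⟩
      refine ⟨hp, mem_closedBall_zero_iff.mpr ?_⟩
      exact (hKr p p.2).trans ((le_abs_self _).trans (Real.norm_eq_abs _ ▸ hM _ hp))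
  simpa only [range_comp, Subtype.range_coe] using hproper.isClosed_range

end ClosedProjection

section Escape

variable {E : Type*} [SeminormedAddCommGroup E] {f : E → E} {R : ℝ}

theorem two_pow_mul_norm_le_norm_iterate (hR : 0 ≤ R) (hf : ∀ z, R ≤ ‖z‖ → 2 * ‖z‖ ≤ ‖f z‖)
    {z : E} (hz : R ≤ ‖z‖) (n : ℕ) : 2 ^ n * ‖z‖ ≤ ‖f^[n] z‖ := by
  induction n with
  | zero => simp
  | succ n ih =>
    have hR_le : R ≤ ‖f^[n] z‖ :=
      hz.trans ((le_mul_of_one_le_left (hR.trans hz) (one_le_pow₀ one_le_two)).trans ih)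
    rw [Function.iterate_succ_apply', pow_succ']
    calc 2 * 2 ^ n * ‖z‖ ≤ 2 * ‖f^[n] z‖ := by rw [mul_assoc]; gcongr
      _ ≤ ‖f (f^[n] z)‖ := hf _ hR_le

theorem norm_iterate_lt_of_isBounded (hR : 0 < R) (hf : ∀ z, R ≤ ‖z‖ → 2 * ‖z‖ ≤ ‖f z‖)
    {z : E} (hbdd : IsBounded (range fun n => f^[n] z)) (n : ℕ) : ‖f^[n] z‖ < R := by
  by_contra! hn
  obtain ⟨C, hC⟩ := isBounded_iff_forall_norm_le.mp hbdd
  have htendsto : Tendsto (fun m => 2 ^ m * ‖f^[n] z‖) atTop atTop :=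
    (tendsto_pow_atTop_atTop_of_one_lt one_lt_two).atTop_mul_const (hR.trans_le hn)
  obtain ⟨m, hm⟩ := (htendsto.eventually_gt_atTop C).exists
  have hle := two_pow_mul_norm_le_norm_iterate hR.le hf hn m
  rw [← Function.iterate_add_apply] at hle
  linarith [hC _ ⟨m + n, rfl⟩]

end Escape

section NormPoly

variable {q : ℕ}

noncomputable def escapeRadius (a : Fin (q - 1) → ℂ) : ℝ := 2 + ∑ i, ‖a i‖

theorem continuous_escapeRadius : Continuous (escapeRadius (q := q)) := by
  unfold escapeRadius; fun_prop

theorem escapeRadius_pos (a : Fin (q - 1) → ℂ) : 0 < escapeRadius a := by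
  unfold escapeRadius; positivity

theorem two_mul_norm_le_norm_normPoly (hq : 2 ≤ q) (a : Fin (q - 1) → ℂ) {z : ℂ}
    (hz : escapeRadius a ≤ ‖z‖) : 2 * ‖z‖ ≤ ‖normPoly q a z‖ := by
  set A := ∑ i, ‖a i‖
  have hA : 0 ≤ A := by positivity
  have hz1 : 1 ≤ ‖z‖ := by unfold escapeRadius at hz; linarith
  have hlower : 1 ≤ ‖z‖ ^ (q - 2) := one_le_pow₀ hz1
  have htail : ‖∑ i : Fin (q - 1), a i * z ^ (q - 2 - (i : ℕ))‖ ≤ A * ‖z‖ ^ (q - 2) := by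
    rw [Finset.sum_mul]
    refine (norm_sum_le _ _).trans (Finset.sum_le_sum fun i _ => ?_)
    rw [norm_mul, norm_pow]
    gcongr ‖a i‖ * ?_
    exact pow_le_pow_right₀ hz1 (Nat.sub_le _ _)
  have hsq : 2 * ‖z‖ + A ≤ ‖z‖ ^ 2 := by unfold escapeRadius at hz; nlinarith
  calc 2 * ‖z‖ ≤ ‖z‖ ^ 2 - A := by linarith
    _ ≤ ‖z‖ ^ (q - 2) * (‖z‖ ^ 2 - A) := le_mul_of_one_le_left (by linarith) hlower
    _ = ‖z ^ q‖ - A * ‖z‖ ^ (q - 2) := by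
      rw [norm_pow, ← Nat.sub_add_cancel hq, pow_add, Nat.add_sub_cancel]; ring
    _ ≤ ‖z ^ q‖ - ‖∑ i : Fin (q - 1), a i * z ^ (q - 2 - (i : ℕ))‖ := by linarith
    _ ≤ ‖normPoly q a z‖ := by
      simpa [normPoly] using
        norm_sub_norm_le (z ^ q) (-∑ i : Fin (q - 1), a i * z ^ (q - 2 - (i : ℕ)))

theorem continuous_normPoly : Continuous fun p : (Fin (q - 1) → ℂ) × ℂ => normPoly q p.1 p.2 := by
  unfold normPoly; fun_prop

theorem continuous_iterate_normPoly (n : ℕ) :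
    Continuous fun p : (Fin (q - 1) → ℂ) × ℂ => (normPoly q p.1)^[n] p.2 := by
  induction n with
  | zero => simpa using continuous_snd
  | succ n ih =>
    simp only [Function.iterate_succ_apply']
    exact continuous_normPoly.comp (continuous_fst.prodMk ih)

theorem hasDerivAt_normPoly (a : Fin (q - 1) → ℂ) (z : ℂ) :
    HasDerivAt (normPoly q a)
      (q * z ^ (q - 1) + ∑ i : Fin (q - 1), a i * ((q - 2 - i : ℕ) * z ^ (q - 2 - i - 1))) z :=
  (hasDerivAt_pow q z).add (HasDerivAt.fun_sum fun i _ => (hasDerivAt_pow _ z).const_mul (a i))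

theorem continuous_deriv_normPoly :
    Continuous fun p : (Fin (q - 1) → ℂ) × ℂ => deriv (normPoly q p.1) p.2 := by
  simp only [fun p : (Fin (q - 1) → ℂ) × ℂ => (hasDerivAt_normPoly p.1 p.2).deriv]
  fun_prop

def boundedCriticalSet (q : ℕ) : Set ((Fin (q - 1) → ℂ) × ℂ) :=
  {p | deriv (normPoly q p.1) p.2 = 0 ∧ ∀ n, ‖(normPoly q p.1)^[n] p.2‖ ≤ escapeRadius p.1}

theorem isClosed_boundedCriticalSet : IsClosed (boundedCriticalSet q) := by
  simp only [boundedCriticalSet, ofPred_and, ofPred_forall]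
  exact (isClosed_eq continuous_deriv_normPoly continuous_const).inter <|
    isClosed_iInter fun n => isClosed_le (continuous_iterate_normPoly n).norm
      (continuous_escapeRadius.comp continuous_fst)

theorem compl_shiftLocus (hq : 2 ≤ q) : (shiftLocus q)ᶜ = Prod.fst '' boundedCriticalSet q := by
  ext a
  simp only [shiftLocus, mem_compl_iff, mem_ofPred_eq, not_forall, not_not, exists_prop,
    mem_image, boundedCriticalSet, Prod.exists, exists_and_right, exists_eq_right]
  refine exists_congr fun c => and_congr_right fun _ => ⟨fun hbdd n => ?_, fun hle => ?_⟩
  · exact (norm_iterate_lt_of_isBounded (escapeRadius_pos a)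
      (fun _ => two_mul_norm_le_norm_normPoly hq a) hbdd n).le
  · exact isBounded_iff_forall_norm_le.mpr ⟨_, forall_mem_range.mpr hle⟩

end NormPoly

/-- The shift locus is an open subset of `ℂ^(q-1)`. -/
theorem stmt_13 (q : ℕ) (hq : 2 ≤ q) : IsOpen (shiftLocus q) := by
  rw [← isClosed_compl_iff, compl_shiftLocus hq]
  exact isClosed_image_fst_of_norm_le isClosed_boundedCriticalSet continuous_escapeRadius
    fun p hp => by simpa using hp.2 0
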